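/- Let O be a finite order ideal in the terms of n variables, K a field, A a commutative Noetherian K-algebra, and B a ∂O-marked set in R_A = A[x_1,…,x_n]. Then the one-step border reduction relation →_B associated with the degree-ordered border reduction structure is Noetherian: there is no infinite sequence g_1 →_B g_2 →_B g_3 →_B … of polynomials of R_A. -/

import Mathlib

open MvPolynomial

/-- A term in `n` variables, viewed as its exponent vector in `ℕ^n`. -/
abbrev Term (n : ℕ) := Fin n →₀ ℕ

/-- The total degree of a term. -/
def termDeg {n : ℕ} (τ : Term n) : ℕ := τ.sum fun _ e => e

/-- `O` is an order ideal: every divisor (componentwise `≤`) of a term of `O` lies in `O`. -/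
def IsOrderIdeal {n : ℕ} (O : Set (Term n)) : Prop :=
  ∀ σ τ : Term n, τ ∈ O → σ ≤ τ → σ ∈ O

/-- The border `∂O` of an order ideal `O`. -/
def border {n : ℕ} (O : Set (Term n)) : Set (Term n) :=
  {μ | μ ∉ O ∧ ∃ τ ∈ O, ∃ i : Fin n, μ = τ + Finsupp.single i 1}

/-- The Pommaret basis `P_O = {σ ∉ O : σ / min σ ∈ O}` of the monomial ideal generated by the
terms outside `O`; here `i` is the minimal variable of `σ`. -/
def pommaret {n : ℕ} (O : Set (Term n)) : Set (Term n) :=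
  {σ | σ ∉ O ∧ ∃ i : Fin n, σ i ≠ 0 ∧ (∀ j : Fin n, j < i → σ j = 0) ∧
    σ - Finsupp.single i 1 ∈ O}

/-- `F` is an `H`-marked set (with tails in `O`): for every `α ∈ H`,
`F α = α - Σ_{σ ∈ O} c_σ σ`, i.e. the coefficient of `α` is `1` and all other
terms in the support of `F α` lie in `O`. -/
def IsMarkedSet {n : ℕ} (A : Type*) [CommRing A] (O H : Set (Term n))
    (F : Term n → MvPolynomial (Fin n) A) : Prop :=
  ∀ α ∈ H, (F α).coeff α = 1 ∧ ∀ γ ∈ (F α).support, γ ≠ α → γ ∈ O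

/-- The `A`-submodule `⟨O⟩_A` of `R_A` spanned by the monomials with exponent in `O`. -/
noncomputable def OSpan {n : ℕ} (A : Type*) [CommRing A] (O : Set (Term n)) :
    Submodule A (MvPolynomial (Fin n) A) :=
  Submodule.span A ((fun σ : Term n => (monomial σ (1 : A) : MvPolynomial (Fin n) A)) '' O)

/-- `R_A = (S) ⊕ ⟨O⟩_A` as an internal direct sum of `A`-modules. -/
def IsBasisDecomp {n : ℕ} (A : Type*) [CommRing A] (O : Set (Term n))
    (S : Set (MvPolynomial (Fin n) A)) : Prop :=
  (Submodule.restrictScalars A (Ideal.span S) ⊓ OSpan A O = ⊥) ∧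
  (Submodule.restrictScalars A (Ideal.span S) ⊔ OSpan A O = ⊤)

/-- `F` is an `H`-marked basis. -/
def IsMarkedBasis {n : ℕ} (A : Type*) [CommRing A] (O H : Set (Term n))
    (F : Term n → MvPolynomial (Fin n) A) : Prop :=
  IsMarkedSet A O H F ∧ IsBasisDecomp A O (F '' H)

/-- The iterated borders: `∂^0 O = O` and `∂^{k+1} O = ∂(∂^0 O ∪ ⋯ ∪ ∂^k O)`. -/
def borderIter {n : ℕ} (O : Set (Term n)) : ℕ → Set (Term n)
  | 0 => O
  | k + 1 => border (⋃ j : Fin (k + 1), borderIter O j.1)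
decreasing_by exact j.2

/-- The index `ind_O(μ)`: the least `k` with `μ ∈ ∂^k O`. -/
noncomputable def indO {n : ℕ} (O : Set (Term n)) (μ : Term n) : ℕ :=
  sInf {k | μ ∈ borderIter O k}

/-- The multiplicative set of `β i` for the degree-ordered border reduction structure:
`M_{β_i} = {η : β_j ∤ η β_i for every j > i}`. -/
def multSet {n m : ℕ} (β : Fin m → Term n) (i : Fin m) : Set (Term n) :=
  {η | ∀ j : Fin m, i < j → ¬ β j ≤ η + β i}

/-- The cone of `β i` by its multiplicative set. -/
def cone {n m : ℕ} (β : Fin m → Term n) (i : Fin m) : Set (Term n) :=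
  {γ | ∃ η ∈ multSet β i, γ = η + β i}

/-- One step of border reduction: some `γ = η β_i ∈ supp g` with `η ∈ M_{β_i}` is replaced
using the marked polynomial `B i`. -/
def BStep {n m : ℕ} {A : Type*} [CommRing A] (β : Fin m → Term n)
    (B : Fin m → MvPolynomial (Fin n) A) (g h : MvPolynomial (Fin n) A) : Prop :=
  ∃ (i : Fin m) (η : Term n), η ∈ multSet β i ∧ η + β i ∈ g.support ∧
    h = g - monomial η (g.coeff (η + β i)) * B i

/-- The S-polynomial of two marked polynomials with head terms `α`, `α'`. -/
noncomputable def Spoly {n : ℕ} {A : Type*} [CommRing A] (α α' : Term n)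
    (f f' : MvPolynomial (Fin n) A) : MvPolynomial (Fin n) A :=
  monomial (α ⊔ α' - α) 1 * f - monomial (α ⊔ α' - α') 1 * f'

/-- `(α, α')` is a neighbour couple of distinct terms. -/
def Neighbour {n : ℕ} (α α' : Term n) : Prop :=
  α ≠ α' ∧ ((∃ j : Fin n, α = α' + Finsupp.single j 1) ∨
    (∃ i j : Fin n, α + Finsupp.single i 1 = α' + Finsupp.single j 1))

/-- `(β i, β j)` is a non-multiplicative couple for the border reduction structure. -/
def NonMultB {n m : ℕ} (β : Fin m → Term n) (i j : Fin m) : Prop :=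
  ∃ (ℓ : Fin n) (δ : Term n), Finsupp.single ℓ 1 ∉ multSet β i ∧ δ ∈ multSet β j ∧
    Finsupp.single ℓ 1 + β i = δ + β j

/-- The Pommaret multiplicative set of a term `α`: terms in the variables `x_1, …, min α`. -/
def pommMult {n : ℕ} (α : Term n) : Set (Term n) :=
  {η | ∀ j : Fin n, η j ≠ 0 → ∀ k : Fin n, k < j → α k = 0}

/-- One step of Pommaret reduction. -/
def PStep {n : ℕ} {A : Type*} [CommRing A] (O : Set (Term n))
    (P : Term n → MvPolynomial (Fin n) A) (g h : MvPolynomial (Fin n) A) : Prop :=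
  ∃ α ∈ pommaret O, ∃ η ∈ pommMult α, η + α ∈ g.support ∧
    h = g - monomial η (g.coeff (η + α)) * P α

/-- `(α, α')` is a non-multiplicative couple for the Pommaret reduction structure. -/
def NonMultP {n : ℕ} (α α' : Term n) : Prop :=
  ∃ ℓ : Fin n, Finsupp.single ℓ 1 ∉ pommMult α ∧
    ∃ δ ∈ pommMult α', Finsupp.single ℓ 1 + α = δ + α'

/-!
Measure a polynomial by the multiset of indices `ind_O` of the terms in its support. A term
`η σ` with `σ ∈ O` has index at most `deg η`. A term `η β_i` with `η ∈ M_{β_i}` has index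
greater than `deg η`: otherwise it would be `η' b` with `b ∈ ∂O` and `deg η' < deg η`, so
`b = β_j` has larger degree than `β_i`, whence `j > i` and `β_j ∣ η β_i`, contradicting
`η ∈ M_{β_i}`. A reduction step removes the term `η β_i` and introduces only terms `η σ` with
`σ` in the tail of `b_i`, so the measure drops in the Dershowitz–Manna order on multisets of
naturals, which is well founded.
-/

section BorderIterUnion

variable {n : ℕ} {O : Set (Term n)}

lemma termDeg_eq_degree (τ : Term n) : termDeg τ = τ.degree := rfl

def borderIterUnion (O : Set (Term n)) (k : ℕ) : Set (Term n) :=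
  ⋃ j : Fin (k + 1), borderIter O j.1

lemma mem_borderIterUnion {μ : Term n} {k : ℕ} :
    μ ∈ borderIterUnion O k ↔ ∃ j ≤ k, μ ∈ borderIter O j := by
  simp only [borderIterUnion, Set.mem_iUnion]
  exact ⟨fun ⟨j, h⟩ => ⟨j, Nat.lt_succ_iff.1 j.2, h⟩,
    fun ⟨j, hj, h⟩ => ⟨⟨j, Nat.lt_succ_iff.2 hj⟩, h⟩⟩

lemma borderIterUnion_zero : borderIterUnion O 0 = O := by
  ext μ
  simp [mem_borderIterUnion, borderIter]

lemma borderIterUnion_mono : Monotone (borderIterUnion O) := fun _ _ hjk _ hμ =>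
  let ⟨l, hl, hμl⟩ := mem_borderIterUnion.1 hμ
  mem_borderIterUnion.2 ⟨l, hl.trans hjk, hμl⟩

lemma borderIterUnion_succ (k : ℕ) :
    borderIterUnion O (k + 1) = borderIterUnion O k ∪ border (borderIterUnion O k) := by
  have hsucc : borderIter O (k + 1) = border (borderIterUnion O k) := by
    rw [borderIter]; rfl
  ext μ
  rw [Set.mem_union, mem_borderIterUnion, mem_borderIterUnion, ← hsucc]
  constructor
  · rintro ⟨j, hj, h⟩
    rcases Nat.of_le_succ hj with hj | rfl
    exacts [Or.inl ⟨j, hj, h⟩, Or.inr h]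
  · rintro (⟨j, hj, h⟩ | h)
    exacts [⟨j, hj.trans k.le_succ, h⟩, ⟨k + 1, le_rfl, h⟩]

lemma single_add_mem_borderIterUnion_succ {τ : Term n} {k : ℕ}
    (hτ : τ ∈ borderIterUnion O k) (i : Fin n) :
    Finsupp.single i 1 + τ ∈ borderIterUnion O (k + 1) := by
  rw [borderIterUnion_succ]
  by_cases h : Finsupp.single i 1 + τ ∈ borderIterUnion O k
  · exact Or.inl h
  · exact Or.inr ⟨h, τ, hτ, i, add_comm _ _⟩

lemma add_mem_borderIterUnion (η : Term n) {τ : Term n} {k : ℕ}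
    (hτ : τ ∈ borderIterUnion O k) : η + τ ∈ borderIterUnion O (k + termDeg η) := by
  induction η using Finsupp.induction_linear generalizing τ k with
  | zero => simpa [termDeg_eq_degree] using hτ
  | add a b ha hb =>
    simpa [termDeg_eq_degree, add_assoc, add_comm (Finsupp.degree a)] using ha (hb hτ)
  | single i c =>
    induction c with
    | zero => simpa [termDeg_eq_degree] using hτ
    | succ c ih =>
      have h := single_add_mem_borderIterUnion_succ ih i
      rw [← add_assoc, ← Finsupp.single_add, add_comm 1] at h
      simpa [termDeg_eq_degree, add_assoc] using h

lemma mem_or_eq_add_border_of_mem_borderIterUnion {μ : Term n} {k : ℕ}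
    (hμ : μ ∈ borderIterUnion O k) :
    μ ∈ O ∨ ∃ b ∈ border O, ∃ η : Term n, termDeg η < k ∧ μ = η + b := by
  induction k generalizing μ with
  | zero =>
    rw [borderIterUnion_zero] at hμ
    exact Or.inl hμ
  | succ k ih =>
    rw [borderIterUnion_succ] at hμ
    rcases hμ with hμ | ⟨hμk, τ, hτ, i, rfl⟩
    · exact (ih hμ).imp_right fun ⟨b, hb, η, hη, h⟩ => ⟨b, hb, η, by omega, h⟩
    · rcases ih hτ with hτO | ⟨b, hb, η, hη, rfl⟩
      · have hO : O ⊆ borderIterUnion O k := fun _ h =>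
          borderIterUnion_mono k.zero_le (by rwa [borderIterUnion_zero])
        exact Or.inr ⟨_, ⟨fun h => hμk (hO h), τ, hτO, i, rfl⟩, 0, by simp [termDeg_eq_degree],
          (zero_add _).symm⟩
      · refine Or.inr ⟨b, hb, η + Finsupp.single i 1, ?_, add_right_comm _ _ _⟩
        simp only [termDeg_eq_degree, map_add, Finsupp.degree_single] at hη ⊢
        omega

lemma indO_le_of_mem_borderIterUnion {μ : Term n} {k : ℕ} (h : μ ∈ borderIterUnion O k) :
    indO O μ ≤ k :=
  let ⟨_, hj, hμj⟩ := mem_borderIterUnion.1 h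
  (Nat.sInf_le hμj).trans hj

lemma lt_indO_of_notMem_borderIterUnion {μ : Term n} {k l : ℕ}
    (hl : μ ∈ borderIterUnion O l) (hk : μ ∉ borderIterUnion O k) : k < indO O μ := by
  by_contra! hle
  obtain ⟨j, -, hμj⟩ := mem_borderIterUnion.1 hl
  exact hk (mem_borderIterUnion.2 ⟨_, hle, Nat.sInf_mem (s := {k | μ ∈ borderIter O k}) ⟨j, hμj⟩⟩)

lemma indO_add_le {σ : Term n} (η : Term n) (hσ : σ ∈ O) : indO O (η + σ) ≤ termDeg η := by
  have h := add_mem_borderIterUnion η (k := 0) (by rwa [borderIterUnion_zero])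
  exact indO_le_of_mem_borderIterUnion (by rwa [zero_add] at h)

end BorderIterUnion

section DegreeOrderedBorder

variable {n m : ℕ} {O : Set (Term n)} {β : Fin m → Term n}

lemma add_notMem_borderIterUnion (hO : IsOrderIdeal O) (hβrange : Set.range β = border O)
    (hβdeg : Monotone fun i => termDeg (β i)) {i : Fin m} {η : Term n}
    (hη : η ∈ multSet β i) : η + β i ∉ borderIterUnion O (termDeg η) := by
  intro hmem
  have hβi : β i ∈ border O := hβrange ▸ Set.mem_range_self i
  rcases mem_or_eq_add_border_of_mem_borderIterUnion hmem with hO' | ⟨b, hb, η', hη', heq⟩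
  · exact hβi.1 (hO _ _ hO' le_add_self)
  · obtain ⟨j, rfl⟩ : b ∈ Set.range β := hβrange ▸ hb
    have hdeg : termDeg η' + termDeg (β j) = termDeg η + termDeg (β i) := by
      simp only [termDeg_eq_degree, ← map_add, heq]
    have hij : i < j := lt_of_not_ge fun hji => by
      have : termDeg (β j) ≤ termDeg (β i) := hβdeg hji
      omega
    exact hη j hij (heq ▸ le_add_self)

lemma termDeg_lt_indO_add (hO : IsOrderIdeal O) (hβrange : Set.range β = border O)
    (hβdeg : Monotone fun i => termDeg (β i)) {i : Fin m} {η : Term n}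
    (hη : η ∈ multSet β i) : termDeg η < indO O (η + β i) := by
  have hβi : β i ∈ borderIterUnion O 1 := by
    rw [borderIterUnion_succ, borderIterUnion_zero]
    exact Or.inr (hβrange ▸ Set.mem_range_self i)
  exact lt_indO_of_notMem_borderIterUnion (add_mem_borderIterUnion η hβi)
    (add_notMem_borderIterUnion hO hβrange hβdeg hη)

end DegreeOrderedBorder

lemma MvPolynomial.exists_eq_add_of_mem_support_sub_monomial_mul {σ R : Type*} [CommRing R]
    {g f : MvPolynomial σ R} {η γ : σ →₀ ℕ} {c : R}
    (hγ : γ ∈ (g - monomial η c * f).support) (hγg : γ ∉ g.support) :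
    ∃ b ∈ f.support, γ = η + b := by
  rw [mem_support_iff, coeff_sub, notMem_support_iff.1 hγg, zero_sub, neg_ne_zero,
    coeff_monomial_mul'] at hγ
  split_ifs at hγ with hηγ
  · exact ⟨γ - η, mem_support_iff.2 (right_ne_zero_of_mul hγ), (add_tsub_cancel_of_le hηγ).symm⟩
  · exact absurd rfl hγ

lemma Finset.isDershowitzMannaLT_map_val {α β : Type*} [DecidableEq α] [Preorder β]
    {s t : Finset α} (f : α → β) {a : α} (ha : a ∈ t \ s)
    (hlt : ∀ x ∈ s \ t, f x < f a) :
    Multiset.IsDershowitzMannaLT (s.val.map f) (t.val.map f) := by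
  have hs : s.val = (s ∩ t).val + (s \ t).val := by
    rw [← Finset.filter_mem_eq_inter, ← Finset.filter_notMem_eq_sdiff]
    exact (Multiset.filter_add_not _ _).symm
  have ht : t.val = (s ∩ t).val + (t \ s).val := by
    rw [Finset.inter_comm, ← Finset.filter_mem_eq_inter, ← Finset.filter_notMem_eq_sdiff]
    exact (Multiset.filter_add_not _ _).symm
  refine ⟨(s ∩ t).val.map f, (s \ t).val.map f, (t \ s).val.map f, ?_, ?_, ?_, ?_⟩
  · exact fun hZ => Multiset.notMem_zero _ (hZ ▸ Multiset.mem_map_of_mem f ha)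
  · rw [hs, Multiset.map_add]
  · rw [ht, Multiset.map_add]
  · simp only [Multiset.mem_map, Finset.mem_val]
    rintro _ ⟨x, hx, rfl⟩
    exact ⟨f a, ⟨a, ha, rfl⟩, hlt x hx⟩

lemma BStep.exists_indO_lt {n m : ℕ} {A : Type*} [CommRing A] {O : Set (Term n)}
    (hO : IsOrderIdeal O) {β : Fin m → Term n} (hβrange : Set.range β = border O)
    (hβdeg : Monotone fun i => termDeg (β i)) {B : Fin m → MvPolynomial (Fin n) A}
    (hB : ∀ i, (B i).coeff (β i) = 1 ∧ ∀ γ ∈ (B i).support, γ ≠ β i → γ ∈ O)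
    {g h : MvPolynomial (Fin n) A} (hstep : BStep β B g h) :
    ∃ γ₀ ∈ g.support \ h.support, ∀ γ ∈ h.support \ g.support, indO O γ < indO O γ₀ := by
  obtain ⟨i, η, hη, hγ₀, rfl⟩ := hstep
  have hγ₀h : η + β i ∉ (g - monomial η (g.coeff (η + β i)) * B i).support := by
    rw [notMem_support_iff, coeff_sub, coeff_monomial_mul, (hB i).1, mul_one, sub_self]
  refine ⟨η + β i, Finset.mem_sdiff.2 ⟨hγ₀, hγ₀h⟩, fun γ hγ => ?_⟩
  obtain ⟨hγh, hγg⟩ := Finset.mem_sdiff.1 hγ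
  obtain ⟨b, hb, rfl⟩ := MvPolynomial.exists_eq_add_of_mem_support_sub_monomial_mul hγh hγg
  have hbO : b ∈ O := (hB i).2 b hb fun hbβ => hγ₀h (hbβ ▸ hγh)
  exact (indO_add_le η hbO).trans_lt (termDeg_lt_indO_add hO hβrange hβdeg hη)

theorem border_reduction_noetherian_general {n : ℕ} (A : Type*) [CommRing A]
    (O : Set (Term n)) (hO : IsOrderIdeal O)
    {m : ℕ} (β : Fin m → Term n)
    (hβrange : Set.range β = border O)
    (hβdeg : Monotone fun i => termDeg (β i))
    (B : Fin m → MvPolynomial (Fin n) A)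
    (hB : ∀ i, (B i).coeff (β i) = 1 ∧ ∀ γ ∈ (B i).support, γ ≠ β i → γ ∈ O) :
    ¬ ∃ g : ℕ → MvPolynomial (Fin n) A, ∀ k : ℕ, BStep β B (g k) (g (k + 1)) := by
  rintro ⟨g, hg⟩
  have hwf := (Multiset.wellFounded_isDershowitzMannaLT (α := ℕ)).onFun
    (f := fun p : MvPolynomial (Fin n) A => p.support.val.map (indO O))
  refine (wellFounded_iff_isEmpty_descending_chain.1 hwf).false ⟨g, fun k => ?_⟩
  obtain ⟨γ₀, hγ₀, hlt⟩ := (hg k).exists_indO_lt hO hβrange hβdeg hB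
  exact Finset.isDershowitzMannaLT_map_val _ hγ₀ hlt

/-- the one-step border reduction relation associated with the
degree-ordered border reduction structure is Noetherian: there is no infinite reduction
chain. -/
theorem border_reduction_noetherian {n : ℕ} (K : Type*) [Field K] (A : Type*) [CommRing A] [Algebra K A]
    [IsNoetherianRing A]
    (O : Set (Term n)) (hO : IsOrderIdeal O) (hOfin : O.Finite)
    {m : ℕ} (β : Fin m → Term n) (hβinj : Function.Injective β)
    (hβrange : Set.range β = border O)
    (hβdeg : Monotone fun i => termDeg (β i))
    (B : Fin m → MvPolynomial (Fin n) A)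
    (hB : ∀ i, (B i).coeff (β i) = 1 ∧ ∀ γ ∈ (B i).support, γ ≠ β i → γ ∈ O) :
    ¬ ∃ g : ℕ → MvPolynomial (Fin n) A, ∀ k : ℕ, BStep β B (g k) (g (k + 1)) :=
  border_reduction_noetherian_general A O hO β hβrange hβdeg B hB
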